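/- Let k ∈ {1, ..., n-2} and j ∈ {3, ..., n}. In S_n, the identity l(s_k⋯s_1 · t_{1,j}) = l(s_k⋯s_1) + 1 holds if and only if j = k+2, in which case s_k⋯s_1 · t_{1,k+2} = s_{k+1} s_k ⋯ s_1. -/
import Mathlib


/-- The simple transposition `s_i = (i, i+1)`, viewed in `Equiv.Perm ℕ`. -/
def sT (i : ℕ) : Equiv.Perm ℕ := Equiv.swap i (i + 1)

/-- The transposition `t_{i,j}` exchanging `i` and `j`. -/
def tT (i j : ℕ) : Equiv.Perm ℕ := Equiv.swap i j

/-- The length (number of inversions) of a permutation of `{1, …, n}`. -/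
def len (n : ℕ) (w : Equiv.Perm ℕ) : ℕ :=
  (((Finset.Icc 1 n) ×ˢ (Finset.Icc 1 n)).filter
    (fun p => p.1 < p.2 ∧ w p.2 < w p.1)).card

/-- `wtil k = s_k s_{k-1} ⋯ s_1` (composition, applying `s_1` first). -/
def wtil (k : ℕ) : Equiv.Perm ℕ :=
  ((List.range k).map (fun m => sT (k - m))).prod

lemma wtil_succ (k : ℕ) : wtil (k+1) = sT (k+1) * wtil k := by
  unfold wtil
  rw [List.range_succ_eq_map]
  simp only [List.map_cons, List.prod_cons, List.map_map]
  congr 1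
  apply congrArg
  apply List.map_congr_left
  intro m hm
  simp [Function.comp, Nat.succ_sub_succ]

lemma wtil_apply (k x : ℕ) :
    wtil k x = if x = 1 then k+1 else if 2 ≤ x ∧ x ≤ k+1 then x - 1 else x := by
  induction k with
  | zero =>
    simp only [wtil, List.range_zero, List.map_nil, List.prod_nil, Equiv.Perm.one_apply]
    split_ifs <;> omega
  | succ k ih =>
    rw [wtil_succ, Equiv.Perm.mul_apply, ih, sT]
    rw [Equiv.swap_apply_def]
    split_ifs <;> omega

lemma len_wtil (n k : ℕ) (hkn : k + 2 ≤ n) : len n (wtil k) = k := by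
  unfold len
  have h : ((Finset.Icc 1 n ×ˢ Finset.Icc 1 n).filter
      (fun p => p.1 < p.2 ∧ (wtil k) p.2 < (wtil k) p.1))
      = ({1} : Finset ℕ) ×ˢ Finset.Icc 2 (k+1) := by
    ext ⟨a, b⟩
    simp only [Finset.mem_filter, Finset.mem_product, Finset.mem_Icc,
      Finset.mem_singleton, wtil_apply]
    split_ifs <;> omega
  rw [h]
  simp only [Finset.card_product, Finset.card_singleton, Nat.card_Icc]
  omega

lemma len_mid (n k : ℕ) (hk1 : 1 ≤ k) (hkn : k + 2 ≤ n) :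
    len n (wtil k * tT 1 (k+2)) = k + 1 := by
  unfold len
  have h : ((Finset.Icc 1 n ×ˢ Finset.Icc 1 n).filter
      (fun p => p.1 < p.2 ∧ (wtil k * tT 1 (k+2)) p.2 < (wtil k * tT 1 (k+2)) p.1))
      = ({1} : Finset ℕ) ×ˢ Finset.Icc 2 (k+2) := by
    ext ⟨a, b⟩
    simp only [Finset.mem_filter, Finset.mem_product, Finset.mem_Icc,
      Finset.mem_singleton, Equiv.Perm.mul_apply, tT, Equiv.swap_apply_def, wtil_apply]
    split_ifs <;> omega
  rw [h]
  simp only [Finset.card_product, Finset.card_singleton, Nat.card_Icc]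
  omega

lemma len_low (n k j : ℕ) (hk1 : 1 ≤ k) (hkn : k + 2 ≤ n) (hj3 : 3 ≤ j)
    (hjk : j ≤ k + 1) :
    len n (wtil k * tT 1 j) = k - 1 := by
  unfold len
  have h : ((Finset.Icc 1 n ×ˢ Finset.Icc 1 n).filter
      (fun p => p.1 < p.2 ∧ (wtil k * tT 1 j) p.2 < (wtil k * tT 1 j) p.1))
      = ({1} : Finset ℕ) ×ˢ Finset.Icc 2 (j-1) ∪ ({j} : Finset ℕ) ×ˢ Finset.Icc (j+1) (k+1) := by
    ext ⟨a, b⟩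
    simp only [Finset.mem_filter, Finset.mem_product, Finset.mem_Icc, Finset.mem_union,
      Finset.mem_singleton, Equiv.Perm.mul_apply, tT, Equiv.swap_apply_def, wtil_apply]
    split_ifs <;> omega
  rw [h, Finset.card_union_of_disjoint]
  · simp only [Finset.card_product, Finset.card_singleton, Nat.card_Icc]
    omega
  · simp only [Finset.disjoint_left, Finset.mem_product, Finset.mem_singleton, Finset.mem_Icc]
    rintro ⟨a, b⟩ ⟨h1, h2⟩ ⟨h3, h4⟩
    omega

lemma len_high (n k j : ℕ) (hk1 : 1 ≤ k) (hkn : k + 2 ≤ n) (hjk : k + 3 ≤ j)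
    (hjn : j ≤ n) :
    len n (wtil k * tT 1 j) = (j - 1) + (j - k - 2) := by
  unfold len
  have h : ((Finset.Icc 1 n ×ˢ Finset.Icc 1 n).filter
      (fun p => p.1 < p.2 ∧ (wtil k * tT 1 j) p.2 < (wtil k * tT 1 j) p.1))
      = ({1} : Finset ℕ) ×ˢ Finset.Icc 2 j ∪ Finset.Icc (k+2) (j-1) ×ˢ ({j} : Finset ℕ) := by
    ext ⟨a, b⟩
    simp only [Finset.mem_filter, Finset.mem_product, Finset.mem_Icc, Finset.mem_union,
      Finset.mem_singleton, Equiv.Perm.mul_apply, tT, Equiv.swap_apply_def, wtil_apply]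
    split_ifs <;> omega
  rw [h, Finset.card_union_of_disjoint]
  · simp only [Finset.card_product, Finset.card_singleton, Nat.card_Icc]
    omega
  · simp only [Finset.disjoint_left, Finset.mem_product, Finset.mem_singleton, Finset.mem_Icc]
    rintro ⟨a, b⟩ ⟨h1, h2⟩ ⟨h3, h4⟩
    omega

/-- For `k ∈ {1, …, n-2}` and `j ∈ {3, …, n}`, the identity
`l(s_k ⋯ s_1 ⬝ t_{1,j}) = l(s_k ⋯ s_1) + 1` holds iff `j = k + 2`, in which case
`s_k ⋯ s_1 ⬝ t_{1,k+2} = s_{k+1} s_k ⋯ s_1`. -/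
theorem stmt9 (n k j : ℕ) (hk1 : 1 ≤ k) (hkn : k + 2 ≤ n) (hj3 : 3 ≤ j) (hjn : j ≤ n) :
    (len n (wtil k * tT 1 j) = len n (wtil k) + 1 ↔ j = k + 2) ∧
    (j = k + 2 → wtil k * tT 1 j = sT (k + 1) * wtil k) := by
  constructor
  · rw [len_wtil n k hkn]
    constructor
    · intro hlen
      by_contra hne
      rcases Nat.lt_or_ge j (k + 2) with hlt | hge
      · rw [len_low n k j hk1 hkn hj3 (by omega)] at hlen; omega
      · rw [len_high n k j hk1 hkn (by omega) hjn] at hlen; omega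
    · rintro rfl
      exact len_mid n k hk1 hkn
  · rintro rfl
    ext x
    simp only [Equiv.Perm.mul_apply, tT, sT, Equiv.swap_apply_def, wtil_apply]
    split_ifs <;> omega
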